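/- Swap-isometry output for the self-tested two-qubit state: let |ψ⟩ be a state and Z_A, X_A, Z_B, X_B self-adjoint involutions with Z_A, X_A commuting with Z_B, X_B, satisfying Z_A|ψ⟩ = Z_B|ψ⟩ and cos θ · X_A(I − Z_A)|ψ⟩ = sin θ · X_B(I + Z_A)|ψ⟩, and also {Z_A, X_A}|ψ⟩ = 0 = {Z_B, X_B}|ψ⟩. Then the SWAP isometry Φ (appending two ancilla qubits in |0⟩, applying Hadamards, controlled-Z_A/Z_B, Hadamards, and controlled-X_A/X_B as in the standard circuit) satisfies Φ(|ψ⟩ ⊗ |00⟩) = (1/cos θ) Z_A^{(+)}|ψ⟩ ⊗ (cos θ |00⟩ + sin θ |11⟩), where Z_A^{(+)} = (I + Z_A)/2. -/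

import Mathlib

/-!
Both ancilla registers see the same projector: `Z_B ψ = Z_A ψ` turns `Z_B^{(b)} ψ` into
`Z_A^{(b)} ψ`, and `Z_A^{(a)} Z_A^{(b)} = δ_{ab} Z_A^{(a)}`, so only the `|00⟩` and `|11⟩`
components survive. The `|00⟩` component is `Z_A^{(+)} ψ`; for `|11⟩`, applying `X_B` to the
hypothesis relating the two branches gives `X_A X_B Z_A^{(-)} ψ = tan θ · Z_A^{(+)} ψ`.
-/

open scoped InnerProductSpace

section InvolutionProj

variable {K M : Type*} [Field K] [AddCommGroup M] [Module K M]

/-- The paper's `Z^{(a)}`, the projection onto the `(-1)^a`-eigenspace of an involution `Z`. -/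
def involutionProj (Z : Module.End K M) (a : Fin 2) : Module.End K M :=
  (1/2 : K) • (1 + ((-1 : K) ^ (a : ℕ)) • Z)

lemma involutionProj_zero (Z : Module.End K M) :
    involutionProj Z 0 = (1/2 : K) • (1 + Z) := by
  simp [involutionProj]

lemma involutionProj_one (Z : Module.End K M) :
    involutionProj Z 1 = (1/2 : K) • (1 - Z) := by
  simp [involutionProj, sub_eq_add_neg]

lemma involutionProj_apply_eq_of_apply_eq {Z Z' : Module.End K M} {v : M} (h : Z v = Z' v)
    (a : Fin 2) : involutionProj Z a v = involutionProj Z' a v := by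
  simp [involutionProj, h]

lemma involutionProj_mul_involutionProj [NeZero (2 : K)] {Z : Module.End K M}
    (hZ : Z * Z = 1) (a b : Fin 2) :
    involutionProj Z a * involutionProj Z b = if a = b then involutionProj Z a else 0 := by
  have expand : ∀ s t : K,
      (1 + s • Z) * (1 + t • Z) = (1 + s * t) • (1 : Module.End K M) + (s + t) • Z := by
    intro s t
    simp only [mul_add, add_mul, one_mul, mul_one, smul_mul_smul, hZ]
    module
  have h2 : (2 : K) ≠ 0 := two_ne_zero
  rw [involutionProj, involutionProj, smul_mul_smul, expand]
  fin_cases a <;> fin_cases b <;> norm_num [involutionProj] <;> match_scalars <;> field_simp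

end InvolutionProj

lemma apply_apply_eq_smul_of_smul_eq {K M : Type*} [Field K] [AddCommGroup M] [Module K M]
    {A B : Module.End K M} (hB : B * B = 1) (hAB : A * B = B * A) {c s : K} (hc : c ≠ 0)
    {v w : M} (h : c • A v = s • B w) : A (B v) = (s / c) • w := by
  have hBB : B (B w) = w := by simpa using LinearMap.congr_fun hB w
  have hcomm : A (B v) = B (A v) := LinearMap.congr_fun hAB v
  rw [hcomm, div_eq_inv_mul, ← smul_smul, eq_inv_smul_iff₀ hc, ← map_smul, h, map_smul, hBB]

theorem stmt19 {H : Type*} [NormedAddCommGroup H] [InnerProductSpace ℂ H]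
    (θ : ℝ) (hθ : θ ∈ Set.Ioc 0 (Real.pi / 4))
    (ZA XA ZB XB : H →ₗ[ℂ] H) (ψ : H)
    (hZA2 : ZA * ZA = 1) (hXB2 : XB * XB = 1)
    (hc4 : XA * XB = XB * XA)
    (hZ : ZA ψ = ZB ψ)
    (hX : (Real.cos θ : ℂ) • XA (((1 : H →ₗ[ℂ] H) - ZA) ψ)
        = (Real.sin θ : ℂ) • XB (((1 : H →ₗ[ℂ] H) + ZA) ψ)) :
    (fun p : Fin 2 × Fin 2 =>
        (if p.1 = 1 then XA else 1)
          ((if p.2 = 1 then XB else 1)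
            ((((1/2 : ℂ) • ((1 : H →ₗ[ℂ] H) + ((-1 : ℂ) ^ (p.1 : ℕ)) • ZA)))
              (((1/2 : ℂ) • ((1 : H →ₗ[ℂ] H) + ((-1 : ℂ) ^ (p.2 : ℕ)) • ZB)) ψ))))
      = fun p =>
        (if p = (0, 0) then (Real.cos θ : ℂ)
          else if p = (1, 1) then (Real.sin θ : ℂ) else 0) •
          ((1 / (Real.cos θ : ℂ)) •
            (((1/2 : ℂ) • ((1 : H →ₗ[ℂ] H) + ZA)) ψ)) := by
  have hcos : (Real.cos θ : ℂ) ≠ 0 := Complex.ofReal_ne_zero.mpr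
    (Real.cos_pos_of_mem_Ioo ⟨by linarith [hθ.1, Real.pi_pos], by linarith [hθ.2, Real.pi_pos]⟩).ne'
  have h11 : XA (XB (involutionProj ZA 1 ψ))
      = ((Real.sin θ : ℂ) / Real.cos θ) • involutionProj ZA 0 ψ := by
    rw [involutionProj_one, involutionProj_zero, LinearMap.smul_apply, LinearMap.smul_apply,
      map_smul, map_smul, apply_apply_eq_smul_of_smul_eq hXB2 hc4 hcos hX, smul_comm]
  funext ⟨a, b⟩
  change (if a = 1 then XA else 1) ((if b = 1 then XB else 1)
      (involutionProj ZA a (involutionProj ZB b ψ))) = _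
  rw [← involutionProj_apply_eq_of_apply_eq hZ, ← Module.End.mul_apply (involutionProj ZA a),
    involutionProj_mul_involutionProj hZA2, ← involutionProj_zero]
  generalize (Real.cos θ : ℂ) = c at hcos h11 ⊢
  generalize (Real.sin θ : ℂ) = s at h11 ⊢
  fin_cases a <;> fin_cases b
  · simp [smul_smul, hcos]
  · simp
  · simp
  · simp [h11, smul_smul, div_eq_mul_one_div s c]
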